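/- arXiv:0704.3221 — 5 statements merged into one kernel-verified Lean document; each statement's English description precedes it below -/
import Mathlib

section
/- For the Aho-Corasick automaton AC(W) of a finite nonempty set of keywords W, and any string x, f(q, x) = u if and only if u is the longest element of the state set V (prefixes of words in W, including the empty string) that is a suffix of x. -/
/-- A shorter suffix of the same list is a suffix of a longer suffix. -/
lemma suffix_of_suffix_length_le' {A : Type*} {u v x : List A}
    (hu : u <:+ x) (hv : v <:+ x) (h : v.length ≤ u.length) : v <:+ u := by
  rw [← List.reverse_prefix] at hu hv ⊢
  rw [List.prefix_iff_eq_take] at hu hv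
  rw [List.prefix_iff_eq_take]
  rw [hu, hv]
  simp [List.take_take, List.length_reverse]
  omega

lemma suffix_append_right' {A : Type*} {a b : List A} (l : List A)
    (h : a <:+ b) : a ++ l <:+ b ++ l := by
  obtain ⟨t, ht⟩ := h
  exact ⟨t, by rw [← List.append_assoc, ht]⟩

/-- Aho–Corasick lemma: for the Aho–Corasick automaton `AC(W)` of a finite
nonempty keyword set `W`, whose state set `V` consists of the empty string and
all prefixes of words in `W`, with initial state `ε` and transition function
`f(u, α) =` the longest element of `V` that is a suffix of `uα`, the extended
transition function satisfies: `f(ε, x) = u` iff `u` is the longest element of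
`V` that is a suffix of `x`. -/
theorem aho_corasick_extended_transition
    {A : Type*} (W : Set (List A)) (hWne : W.Nonempty) (hWfin : W.Finite)
    (V : Set (List A))
    (hV : V = {u : List A | u = [] ∨ ∃ w ∈ W, u <+: w})
    (f : List A → A → List A)
    (hf : ∀ u ∈ V, ∀ α : A,
        f u α ∈ V ∧ f u α <:+ u ++ [α] ∧
        ∀ v ∈ V, v <:+ u ++ [α] → v.length ≤ (f u α).length)
    (x u : List A) :
    List.foldl f [] x = u ↔
      (u ∈ V ∧ u <:+ x ∧ ∀ v ∈ V, v <:+ x → v.length ≤ u.length) := by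
  have hnil : ([] : List A) ∈ V := by rw [hV]; exact Or.inl rfl
  have main : ∀ y : List A, List.foldl f [] y ∈ V ∧ List.foldl f [] y <:+ y ∧
      ∀ v ∈ V, v <:+ y → v.length ≤ (List.foldl f [] y).length := by
    intro y
    induction y using List.reverseRecOn with
    | nil =>
      refine ⟨hnil, List.nil_suffix, ?_⟩
      intro v hvV hvs
      simp [List.suffix_nil.mp hvs]
    | append_singleton y α ih =>
      obtain ⟨h1, h2, h3⟩ := ih
      set u' := List.foldl f [] y with hu'
      have hfold : List.foldl f [] (y ++ [α]) = f u' α := by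
        rw [List.foldl_append]; rfl
      obtain ⟨hfV, hfs, hfmax⟩ := hf u' h1 α
      rw [hfold]
      refine ⟨hfV, hfs.trans (suffix_append_right' [α] h2), ?_⟩
      intro v hvV hvs
      rcases List.eq_nil_or_concat v with rfl | ⟨v', β, rfl⟩
      · exact (List.length_nil (α := A)) ▸
          (hfmax [] hnil List.nil_suffix)
      · simp only [List.concat_eq_append] at hvV hvs
        have hβ : β = α := by
          obtain ⟨t, ht⟩ := hvs
          have := congrArg (·.getLast?) ht
          simpa using this
        have hv' : v' <:+ y := by
          obtain ⟨t, ht⟩ := hvs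
          rw [hβ, ← List.append_assoc] at ht
          exact ⟨t, by
            have := List.append_inj' ht rfl
            exact this.1⟩
        have hv'V : v' ∈ V := by
          rw [hV] at hvV ⊢
          rcases hvV with h | ⟨w, hw, hp⟩
          · simp at h
          · exact Or.inr ⟨w, hw, (List.prefix_append v' [β]).trans hp⟩
        have hlen : v'.length ≤ u'.length := h3 v' hv'V hv'
        have hvu' : v' <:+ u' := suffix_of_suffix_length_le' h2 hv' hlen
        have : v' ++ [β] <:+ u' ++ [α] := by
          rw [hβ]; exact suffix_append_right' [α] hvu'
        simpa using hfmax (v' ++ [β]) hvV this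
  constructor
  · rintro rfl; exact main x
  · rintro ⟨huV, hus, humax⟩
    obtain ⟨h1, h2, h3⟩ := main x
    have hle1 : u.length ≤ (List.foldl f [] x).length := h3 u huV hus
    have hle2 : (List.foldl f [] x).length ≤ u.length := humax _ h1 h2
    have : List.foldl f [] x <:+ u :=
      suffix_of_suffix_length_le' hus h2 (le_antisymm hle2 hle1).le
    exact this.eq_of_length (le_antisymm hle2 hle1)
end

section
/- Let (Xₙ) be i.i.d. over {a, b} with P(a) = p, P(b) = q = 1 − p, and p ≠ q, 0 < p < 1. Let T be the first n such that X₁⋯Xₙ ends in ba (equivalently, in ba or abba). Then P(T = n) = (q·pⁿ − p·qⁿ)/(p − q) for all n ≥ 2. -/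
open scoped Classical

/-- Weight of a binary string of length `n` under the memoryless source with
`P(a) = P(true) = p` and `P(b) = P(false) = 1 - p`. -/
noncomputable def wt (p : ℝ) {n : ℕ} (ω : Fin n → Bool) : ℝ :=
  ∏ i, if ω i then p else 1 - p

/-- A string ends in `ba` (with `a = true`, `b = false`).  Since `ba` is a
suffix of `abba`, this is equivalent to ending in `ba` or `abba`. -/
def hitBa (x : List Bool) : Prop := [false, true] <:+ x

/-- `P(T = n)` where `T` is the first index such that `X₁⋯Xₙ` ends in `ba`. -/
noncomputable def probSoonerEq (p : ℝ) (n : ℕ) : ℝ :=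
  ∑ ω : Fin n → Bool,
    if hitBa (List.ofFn ω) ∧ ∀ m < n, ¬ hitBa ((List.ofFn ω).take m)
    then wt p ω else 0

/-- The string `a^i b^(n-1-i) a`. -/
def pat (n i : ℕ) : Fin n → Bool := fun j => decide (j.val < i ∨ j.val = n - 1)

lemma hitBa_iff {x : List Bool} {k : ℕ} (hx : x.length = k + 2) :
    hitBa x ↔ x[k]'(by omega) = false ∧ x[k+1]'(by omega) = true := by
  have h1 : k < x.length := by omega
  have h2 : k + 1 < x.length := by omega
  have hd : x.drop k = [x[k], x[k+1]] := by
    rw [List.drop_eq_getElem_cons h1, List.drop_eq_getElem_cons h2,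
      List.drop_eq_nil_of_le (by omega)]
  unfold hitBa
  rw [List.suffix_iff_eq_drop]
  simp only [List.length_cons, List.length_nil, hx]
  have : k + 2 - (0 + 1 + 1) = k := by omega
  rw [this, hd]
  constructor
  · rintro h; exact ⟨(List.cons.injEq _ _ _ _ ▸ h).1.symm, by
      have := (List.cons.injEq _ _ _ _ ▸ h).2
      exact ((List.cons.injEq _ _ _ _ ▸ this).1).symm⟩
  · rintro ⟨h1', h2'⟩; rw [h1', h2']

lemma hitBa_len {x : List Bool} (h : hitBa x) : 2 ≤ x.length :=
  h.length_le

lemma cond_iff (m : ℕ) (ω : Fin (m+2) → Bool) :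
    (hitBa (List.ofFn ω) ∧ ∀ k < m + 2, ¬ hitBa ((List.ofFn ω).take k)) ↔
    ∃ i : Fin (m+1), ω = pat (m+2) i.val := by
  constructor
  · rintro ⟨h1, h2⟩
    have hlen : (List.ofFn ω).length = m + 2 := by simp
    rw [hitBa_iff hlen] at h1
    simp only [List.getElem_ofFn] at h1
    obtain ⟨hA, hB⟩ := h1
    -- no earlier hit: ∀ k, k + 2 < m + 2 → ...
    have h3 : ∀ k (hk : k + 2 < m + 2),
        ω ⟨k, by omega⟩ = false → ω ⟨k+1, by omega⟩ = false := by
      intro k hk hf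
      by_contra ht
      apply h2 (k + 2) hk
      have hlt : ((List.ofFn ω).take (k+2)).length = k + 2 := by
        simp; omega
      rw [hitBa_iff hlt]
      constructor
      · rw [List.getElem_take, List.getElem_ofFn]; exact hf
      · rw [List.getElem_take, List.getElem_ofFn]
        simp only [Bool.not_eq_false] at ht; exact ht
    -- least false index
    have hPex : ∃ j, ∃ h : j < m + 2, ω ⟨j, h⟩ = false := ⟨m, by omega, hA⟩
    set i := Nat.find hPex with hi
    obtain ⟨hilt, hifalse⟩ := Nat.find_spec hPex
    have hile : i ≤ m := Nat.find_le ⟨by omega, hA⟩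
    have htrue : ∀ j (hj : j < i), ω ⟨j, by omega⟩ = true := by
      intro j hj
      have h := Nat.find_min hPex hj
      push_neg at h
      have h2' := h (show j < m + 2 by omega)
      simp only [Bool.not_eq_false] at h2'
      exact h2'
    -- propagate false forward
    have hfalse : ∀ d (hd : i + d ≤ m), ω ⟨i + d, by omega⟩ = false := by
      intro d
      induction d with
      | zero => intro _; simp only [Nat.add_zero]; exact hifalse
      | succ d ih =>
        intro hd
        have := h3 (i + d) (by omega) (ih (by omega))
        exact this
    refine ⟨⟨i, by omega⟩, ?_⟩
    funext j
    unfold pat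
    simp only [Fin.val_mk]
    by_cases hjm : j.val = m + 1
    · have e : (⟨m + 1, by omega⟩ : Fin (m+2)) = j := Fin.ext (by simp [hjm])
      rw [e] at hB
      rw [hB]; symm; exact decide_eq_true (by omega)
    · by_cases hji : j.val < i
      · have e : (⟨j.val, by omega⟩ : Fin (m+2)) = j := Fin.ext rfl
        have ht := htrue j.val hji
        rw [e] at ht
        rw [ht]; symm; exact decide_eq_true (by omega)
      · have hjle : j.val ≤ m := by omega
        have h := hfalse (j.val - i) (by omega)
        have e : (⟨i + (j.val - i), by omega⟩ : Fin (m+2)) = j := Fin.ext (by simp; omega)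
        rw [e] at h
        rw [h]; symm; exact decide_eq_false (by omega)
  · rintro ⟨i, rfl⟩
    have hi : i.val ≤ m := by omega
    constructor
    · have hlen : (List.ofFn (pat (m+2) i.val)).length = m + 2 := by simp
      rw [hitBa_iff hlen]
      constructor
      · rw [List.getElem_ofFn]; unfold pat; simp only [Fin.val_mk]
        exact decide_eq_false (by omega)
      · rw [List.getElem_ofFn]; unfold pat; simp only [Fin.val_mk]
        exact decide_eq_true (by omega)
    · intro k hk hhit
      have h2le : 2 ≤ ((List.ofFn (pat (m+2) i.val)).take k).length := hitBa_len hhit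
      have hklen' : ((List.ofFn (pat (m+2) i.val)).take k).length = k := by
        simp; omega
      obtain ⟨k', rfl⟩ : ∃ k', k = k' + 2 := ⟨k - 2, by omega⟩
      rw [hitBa_iff hklen'] at hhit
      obtain ⟨hf, ht⟩ := hhit
      rw [List.getElem_take, List.getElem_ofFn] at hf ht
      unfold pat at hf ht
      simp only [decide_eq_true_eq, decide_eq_false_iff_not] at hf ht
      push_neg at hf
      omega

lemma wt_pat (p : ℝ) (m i : ℕ) (hi : i ≤ m) :
    wt p (pat (m+2) i) = p ^ (i+1) * (1-p) ^ (m+1-i) := by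
  unfold wt pat
  have hL : (∏ j ∈ Finset.Ico 0 i, (if j < i then p else 1 - p)) = p ^ i := by
    calc (∏ j ∈ Finset.Ico 0 i, (if j < i then p else 1 - p))
        = ∏ _j ∈ Finset.Ico 0 i, p :=
          Finset.prod_congr rfl (fun j hj => by
            simp only [Finset.mem_Ico] at hj; simp [hj.2])
      _ = p ^ i := by rw [Finset.prod_const, Nat.card_Ico, Nat.sub_zero]
  have hR : (∏ j ∈ Finset.Ico i (m+1), (if j < i then p else 1 - p))
      = (1-p) ^ (m+1-i) := by
    calc (∏ j ∈ Finset.Ico i (m+1), (if j < i then p else 1 - p))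
        = ∏ _j ∈ Finset.Ico i (m+1), (1-p) :=
          Finset.prod_congr rfl (fun j hj => by
            simp only [Finset.mem_Ico] at hj
            have : ¬ (j < i) := by omega
            simp [this])
      _ = (1-p) ^ (m+1-i) := by rw [Finset.prod_const, Nat.card_Ico]
  calc (∏ j : Fin (m+2), if (pat (m+2) i j) = true then p else 1 - p)
      = ∏ j ∈ Finset.range (m+2), (if j < i ∨ j = m + 1 then p else 1 - p) := by
        rw [← Fin.prod_univ_eq_prod_range (fun j => if j < i ∨ j = m + 1 then p else 1 - p)]
        refine Finset.prod_congr rfl (fun j _ => ?_)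
        unfold pat
        simp only [decide_eq_true_eq, Fin.val_mk]
        have e : m + 2 - 1 = m + 1 := by omega
        rw [e]
    _ = (∏ j ∈ Finset.range (m+1), (if j < i ∨ j = m + 1 then p else 1 - p)) *
        (if (m+1) < i ∨ (m+1) = m + 1 then p else 1 - p) := Finset.prod_range_succ _ _
    _ = (∏ j ∈ Finset.range (m+1), (if j < i then p else 1 - p)) * p := by
        congr 1
        · refine Finset.prod_congr rfl (fun j hj => ?_)
          simp only [Finset.mem_range] at hj
          have : ¬ (j = m + 1) := by omega
          simp [this]
        · simp
    _ = ((∏ j ∈ Finset.Ico 0 i, (if j < i then p else 1 - p)) *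
         (∏ j ∈ Finset.Ico i (m+1), (if j < i then p else 1 - p))) * p := by
        rw [Finset.prod_Ico_consecutive _ (Nat.zero_le i) (by omega),
          ← Finset.range_eq_Ico]
    _ = (p ^ i * (1-p) ^ (m+1-i)) * p := by rw [hL, hR]
    _ = p ^ (i+1) * (1-p) ^ (m+1-i) := by ring

lemma pat_inj (m : ℕ) : ∀ i j : Fin (m+1),
    pat (m+2) i.val = pat (m+2) j.val → i = j := by
  intro i j h
  by_contra hne
  wlog hij : i.val < j.val generalizing i j
  · exact this j i h.symm (Ne.symm hne) (by omega)
  · have := congrFun h ⟨i.val, by omega⟩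
    unfold pat at this
    simp only [decide_eq_decide] at this
    have h1 : ¬ ((i:ℕ) < i.val ∨ (i:ℕ) = m + 2 - 1) := by omega
    have h2 : ((i:ℕ) < j.val ∨ (i:ℕ) = m + 2 - 1) := Or.inl hij
    exact h1 (this.mpr h2)

/-- For an i.i.d. binary source with `P(a) = p`, `P(b) = q = 1 - p`,
`0 < p < 1` and `p ≠ q`, the sooner-time `T` of the pattern `ba`
(equivalently, of the compound pattern `{ba, abba}`) satisfies
`P(T = n) = (q pⁿ - p qⁿ)/(p - q)` for all `n ≥ 2`. -/
theorem soonerTime_prob_eq (p q : ℝ) (hp0 : 0 < p) (hp1 : p < 1)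
    (hq : q = 1 - p) (hpq : p ≠ q) :
    ∀ n : ℕ, 2 ≤ n →
      probSoonerEq p n = (q * p ^ n - p * q ^ n) / (p - q) := by
  intro n hn
  obtain ⟨m, rfl⟩ : ∃ m, n = m + 2 := ⟨n - 2, by omega⟩
  have hpqne : p - q ≠ 0 := sub_ne_zero.mpr hpq
  unfold probSoonerEq
  rw [← Finset.sum_filter]
  have hset : Finset.univ.filter (fun ω : Fin (m+2) → Bool =>
      hitBa (List.ofFn ω) ∧ ∀ k < m + 2, ¬ hitBa ((List.ofFn ω).take k)) =
      Finset.image (fun i : Fin (m+1) => pat (m+2) i.val) Finset.univ := by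
    ext ω
    simp only [Finset.mem_filter, Finset.mem_univ, true_and, Finset.mem_image]
    rw [cond_iff]
    constructor
    · rintro ⟨i, hω⟩; exact ⟨i, hω.symm⟩
    · rintro ⟨i, hω⟩; exact ⟨i, hω.symm⟩
  rw [hset, Finset.sum_image (fun i _ j _ h => pat_inj m i j h)]
  have hwt : ∀ i : Fin (m+1), wt p (pat (m+2) i.val) = p ^ (i.val+1) * q ^ (m+1-i.val) := by
    intro i; rw [wt_pat p m i.val (by omega), hq]
  rw [Finset.sum_congr rfl (fun i _ => hwt i)]
  rw [Fin.sum_univ_eq_sum_range (fun i => p ^ (i+1) * q ^ (m+1-i))]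
  rw [eq_div_iff hpqne]
  have hsum : (∑ i ∈ Finset.range (m+1), p ^ (i+1) * q ^ (m+1-i))
      = (p * q) * ∑ i ∈ Finset.range (m+1), p ^ i * q ^ (m - i) := by
    rw [Finset.mul_sum]
    refine Finset.sum_congr rfl (fun i hi => ?_)
    simp only [Finset.mem_range] at hi
    have : m + 1 - i = (m - i) + 1 := by omega
    rw [this]; ring
  rw [hsum, mul_assoc]
  have hg := geom_sum₂_mul p q (m+1)
  simp only [Nat.add_sub_cancel] at hg
  rw [hg]
  ring
end

section
/- Let (Xₙ) be i.i.d. over {a, b} with P(a) = p, P(b) = q = 1 − p, 0 < p < 1, and let T be the sooner-time of the compound pattern {ba, abba}. The probability that at time T the string X₁⋯X_T ends in abba (i.e., ba and abba are completed simultaneously at their first occurrence) equals p²q; consequently the probability that ba is observed strictly before abba equals 1 − p²q. -/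
open scoped Classical

/-- A string ends in `ba` or in `abba` (with `a = true`, `b = false`). -/
def hitBaAbba (x : List Bool) : Prop :=
  [false, true] <:+ x ∨ [true, false, false, true] <:+ x

/-- The event `{T = n}` for the sooner-time `T` of `{ba, abba}`. -/
def soonerAt (n : ℕ) (ω : Fin n → Bool) : Prop :=
  hitBaAbba (List.ofFn ω) ∧ ∀ m < n, ¬ hitBaAbba ((List.ofFn ω).take m)

/-- `P(T = n and X₁⋯X_T ends in abba)`. -/
noncomputable def probSimul (p : ℝ) (n : ℕ) : ℝ :=
  ∑ ω : Fin n → Bool,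
    if soonerAt n ω ∧ [true, false, false, true] <:+ List.ofFn ω
    then wt p ω else 0

/-- `P(T = n and X₁⋯X_T does not end in abba)`, i.e. `ba` strictly first. -/
noncomputable def probBaFirst (p : ℝ) (n : ℕ) : ℝ :=
  ∑ ω : Fin n → Bool,
    if soonerAt n ω ∧ ¬ ([true, false, false, true] <:+ List.ofFn ω)
    then wt p ω else 0

/-! ### Auxiliary list lemmas -/

lemma hit_iff (x : List Bool) : hitBaAbba x ↔ [false, true] <:+ x := by
  constructor
  · rintro (h | h)
    · exact h
    · exact (by decide : [false, true] <:+ [true, false, false, true]).trans h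
  · exact Or.inl

/-- no prefix of `l` ends in `ba`. -/
def noBa (l : List Bool) : Prop := ∀ m, ¬ [false, true] <:+ l.take m

lemma noBa_cons_true {l : List Bool} : noBa (true :: l) ↔ noBa l := by
  constructor
  · intro h m
    have h2 := h (m + 1)
    rw [List.take_succ_cons, List.suffix_cons_iff] at h2
    tauto
  · intro h m
    cases m with
    | zero => simp [noBa]
    | succ m =>
      rw [List.take_succ_cons, List.suffix_cons_iff]
      rintro (h1 | h2)
      · simp at h1
      · exact h m h2

lemma noBa_cons_false {l : List Bool} :
    noBa (false :: l) ↔ noBa l ∧ ∀ m, l.take m ≠ [true] := by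
  constructor
  · intro h
    refine ⟨fun m => ?_, fun m => ?_⟩
    · have h2 := h (m + 1)
      rw [List.take_succ_cons, List.suffix_cons_iff] at h2
      tauto
    · intro hm
      have h2 := h (m + 1)
      rw [List.take_succ_cons, hm] at h2
      exact h2 (List.suffix_refl _)
  · rintro ⟨h1, h2⟩ m
    cases m with
    | zero => simp
    | succ m =>
      rw [List.take_succ_cons, List.suffix_cons_iff]
      rintro (h3 | h4)
      · have : l.take m = [true] := by
          simpa using h3.symm
        exact h2 m this
      · exact h1 m h4

lemma noBa_iff (l : List Bool) :
    noBa l ↔ ∃ i j, l = List.replicate i true ++ List.replicate j false := by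
  induction l with
  | nil =>
    constructor
    · intro _; exact ⟨0, 0, rfl⟩
    · intro _ m; simp
  | cons a l ih =>
    cases a
    · rw [noBa_cons_false]
      constructor
      · rintro ⟨h1, h2⟩
        obtain ⟨i, j, rfl⟩ := ih.mp h1
        cases i with
        | zero =>
          exact ⟨0, j + 1, by simp [List.replicate_succ]⟩
        | succ i =>
          exfalso
          exact h2 1 (by simp [List.replicate_succ])
      · rintro ⟨i, j, hij⟩
        have hi : i = 0 := by
          cases i with
          | zero => rfl
          | succ i => simp [List.replicate_succ] at hij
        subst hi
        simp only [List.replicate, List.nil_append] at hij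
        cases j with
        | zero => simp at hij
        | succ j =>
          rw [List.replicate_succ] at hij
          obtain ⟨rfl⟩ : l = List.replicate j false := by
            simpa using hij
          constructor
          · exact ih.mpr ⟨0, j, by simp⟩
          · intro m hm
            rw [List.take_replicate] at hm
            have : true ∈ List.replicate (min m j) false := by rw [hm]; simp
            simp at this
    · rw [noBa_cons_true]
      constructor
      · intro h
        obtain ⟨i, j, rfl⟩ := ih.mp h
        exact ⟨i + 1, j, by simp [List.replicate_succ]⟩
      · rintro ⟨i, j, hij⟩
        cases i with
        | zero =>
          cases j with
          | zero => simp at hij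
          | succ j => simp [List.replicate_succ] at hij
        | succ i =>
          rw [List.replicate_succ] at hij
          obtain ⟨rfl⟩ : l = List.replicate i true ++ List.replicate j false := by
            simpa using hij
          exact ih.mpr ⟨i, j, rfl⟩

/-- The canonical word `a^i b^(j+1) a`. -/
def canon (i j : ℕ) : List Bool :=
  List.replicate i true ++ List.replicate (j + 1) false ++ [true]

lemma canon_length (i j : ℕ) : (canon i j).length = i + j + 2 := by
  simp [canon]; omega

lemma canon_eq_append (i j : ℕ) :
    canon i j = (List.replicate i true ++ List.replicate j false) ++ [false, true] := by
  simp [canon, List.replicate_succ' (n := j) (a := false), List.append_assoc]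

lemma noBa_canon_front (i j : ℕ) :
    noBa (List.replicate i true ++ List.replicate (j + 1) false) :=
  (noBa_iff _).mpr ⟨i, j + 1, rfl⟩

lemma soonerAt_iff (n : ℕ) (ω : Fin n → Bool) :
    soonerAt n ω ↔ ∃ i j, n = i + j + 2 ∧ List.ofFn ω = canon i j := by
  have hlen : (List.ofFn ω).length = n := List.length_ofFn
  constructor
  · rintro ⟨h1, h2⟩
    rw [hit_iff] at h1
    obtain ⟨s, hs⟩ := h1
    have hslen : s.length + 2 = n := by
      rw [← hlen, ← hs]; simp
    -- no ba in `s ++ [false]`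
    have hnoba : noBa (s ++ [false]) := by
      intro m hm
      set m' := min m (s.length + 1) with hm'
      have hmm : (s ++ [false]).take m = (s ++ [false]).take m' := by
        apply List.take_eq_take_iff.mpr
        simp only [hm', List.length_append, List.length_singleton]
        omega
      have happ : s ++ [false, true] = (s ++ [false]) ++ [true] := by simp
      have hle : m' ≤ (s ++ [false]).length := by
        simp only [List.length_append, List.length_singleton, hm']
        omega
      have htake : ((s ++ [false]) ++ [true]).take m' = (s ++ [false]).take m' :=
        List.take_append_of_le_length hle
      rw [hmm, ← htake, ← happ, hs] at hm
      exact h2 m' (by omega) (Or.inl hm)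
    obtain ⟨i, j, hij⟩ := (noBa_iff _).mp hnoba
    have hfalse : false ∈ List.replicate i true ++ List.replicate j false := by
      rw [← hij]; simp
    have hj : j ≠ 0 := by
      rintro rfl
      simp at hfalse
    obtain ⟨j', rfl⟩ : ∃ j', j = j' + 1 := ⟨j - 1, by omega⟩
    refine ⟨i, j', ?_, ?_⟩
    · have := congrArg List.length hij
      simp at this
      omega
    · rw [← hs]
      have : s ++ [false, true] = (s ++ [false]) ++ [true] := by simp
      rw [this, hij]
      rfl
  · rintro ⟨i, j, rfl, hc⟩
    constructor
    · rw [hit_iff, hc, canon_eq_append]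
      exact ⟨_, rfl⟩
    · intro m hm
      rw [hit_iff, hc]
      have htake : (canon i j).take m
          = (List.replicate i true ++ List.replicate (j + 1) false).take m := by
        rw [canon, List.take_append_of_le_length]
        simp
        omega
      rw [htake]
      exact noBa_canon_front i j m

lemma abba_canon (i j : ℕ) :
    [true, false, false, true] <:+ canon i j ↔ 1 ≤ i ∧ j = 1 := by
  rw [← List.reverse_prefix]
  have hrev : (canon i j).reverse
      = true :: (List.replicate (j + 1) false ++ List.replicate i true) := by
    simp [canon, List.reverse_append]
  rw [hrev]
  show [true, false, false, true] <+: _ ↔ _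
  rw [List.replicate_succ, List.cons_append, List.cons_prefix_cons]
  simp only [true_and]
  constructor
  · rintro h
    rw [List.cons_prefix_cons] at h
    obtain ⟨-, h⟩ := h
    match j, h with
    | 0, h =>
      exfalso
      cases i with
      | zero => simp at h
      | succ i => simp [List.replicate_succ, List.cons_prefix_cons] at h
    | 1, h =>
      refine ⟨?_, rfl⟩
      simp only [List.replicate_succ, List.nil_append, List.cons_append,
        List.cons_prefix_cons, true_and] at h
      cases i with
      | zero => simp [List.replicate_succ] at h
      | succ i => omega
    | (j + 2), h =>
      exfalso
      simp [List.replicate_succ, List.cons_prefix_cons] at h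
  · rintro ⟨hi, rfl⟩
    obtain ⟨i, rfl⟩ : ∃ i', i = i' + 1 := ⟨i - 1, by omega⟩
    simp [List.replicate_succ, List.cons_prefix_cons]

/-- the canonical `ω` with `i` leading `a`s and a final `a`. -/
def canonFn (n i : ℕ) : Fin n → Bool :=
  fun k => decide (k.val < i) || decide (k.val = n - 1)

lemma ofFn_canonFn (n i j : ℕ) (h : n = i + j + 2) :
    List.ofFn (canonFn n i) = canon i j := by
  subst h
  apply List.ext_getElem
  · simp [canon_length]
  · intro k h1 h2
    simp only [List.getElem_ofFn, canonFn, canon, List.getElem_append,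
      List.getElem_replicate]
    simp only [List.length_ofFn] at h1
    simp only [List.length_append, List.length_replicate, List.length_singleton]
    split_ifs with hk1 hk2 <;>
      simp_all <;> omega

lemma takeWhile_canon (i j : ℕ) : ((canon i j).takeWhile id).length = i := by
  induction i with
  | zero => simp [canon, List.replicate_succ]
  | succ i ih =>
    rw [canon, List.replicate_succ, List.cons_append, List.cons_append,
      List.takeWhile_cons]
    simpa [canon] using ih

lemma wt_canon (p : ℝ) {n : ℕ} (ω : Fin n → Bool) (i j : ℕ)
    (h : List.ofFn ω = canon i j) :
    wt p ω = p ^ (i + 1) * (1 - p) ^ (j + 1) := by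
  unfold wt
  rw [← List.prod_ofFn]
  have hmap : List.ofFn (fun k => if ω k then p else 1 - p)
      = (List.ofFn ω).map (fun b => if b then p else 1 - p) := by
    rw [List.map_ofFn]
    rfl
  rw [hmap, h]
  simp [canon]
  ring

noncomputable def probAt (p : ℝ) (n : ℕ) : ℝ :=
  ∑ ω : Fin n → Bool, if soonerAt n ω then wt p ω else 0

lemma probSimul_add_probBaFirst (p : ℝ) (n : ℕ) :
    probSimul p n + probBaFirst p n = probAt p n := by
  unfold probSimul probBaFirst probAt
  rw [← Finset.sum_add_distrib]
  refine Finset.sum_congr rfl fun ω _ => ?_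
  by_cases h1 : soonerAt n ω <;>
    by_cases h2 : [true, false, false, true] <:+ List.ofFn ω <;>
      simp [h1, h2]

lemma probSimul_eq (p : ℝ) (n : ℕ) :
    probSimul p n = if 4 ≤ n then p ^ (n - 2) * (1 - p) ^ 2 else 0 := by
  unfold probSimul
  by_cases hn : 4 ≤ n
  · obtain ⟨i, rfl⟩ : ∃ i', n = i' + 1 + 3 := ⟨n - 4, by omega⟩
    have hi1 : 1 ≤ i + 1 := by omega
    have key : ∀ ω : Fin (i + 1 + 3) → Bool,
        (soonerAt (i + 1 + 3) ω ∧ [true, false, false, true] <:+ List.ofFn ω)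
          ↔ ω = canonFn (i + 1 + 3) (i + 1) := by
      intro ω
      constructor
      · rintro ⟨hs, habba⟩
        obtain ⟨a, b, hab, hc⟩ := (soonerAt_iff _ ω).mp hs
        rw [hc, abba_canon] at habba
        obtain ⟨ha, rfl⟩ := habba
        have : a = i + 1 := by omega
        subst this
        rw [← List.ofFn_inj, ofFn_canonFn (i + 1 + 3) (i + 1) 1 (by omega)]
        exact hc
      · rintro rfl
        have hofn : List.ofFn (canonFn (i + 1 + 3) (i + 1)) = canon (i + 1) 1 :=
          ofFn_canonFn _ _ _ (by omega)
        constructor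
        · exact (soonerAt_iff _ _).mpr ⟨i + 1, 1, by omega, hofn⟩
        · rw [hofn, abba_canon]
          exact ⟨hi1, rfl⟩
    rw [if_pos hn]
    calc (∑ ω : Fin (i + 1 + 3) → Bool,
          if soonerAt (i + 1 + 3) ω ∧ [true, false, false, true] <:+ List.ofFn ω
          then wt p ω else 0)
        = ∑ ω : Fin (i + 1 + 3) → Bool,
            if ω = canonFn (i + 1 + 3) (i + 1) then wt p ω else 0 := by
          refine Finset.sum_congr rfl fun ω _ => ?_
          rw [if_congr (key ω) rfl rfl]
      _ = wt p (canonFn (i + 1 + 3) (i + 1)) := by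
          rw [Finset.sum_ite_eq' Finset.univ]
          simp
      _ = p ^ (i + 1 + 3 - 2) * (1 - p) ^ 2 := by
          rw [wt_canon p _ (i + 1) 1 (ofFn_canonFn _ _ _ (by omega))]
          have h23 : i + 1 + 3 - 2 = i + 1 + 1 := by omega
          rw [h23]
  · rw [if_neg hn]
    refine Finset.sum_eq_zero fun ω _ => ?_
    rw [if_neg]
    rintro ⟨hs, habba⟩
    obtain ⟨a, b, hab, hc⟩ := (soonerAt_iff _ ω).mp hs
    rw [hc, abba_canon] at habba
    omega

lemma probAt_eq (p : ℝ) (m : ℕ) :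
    probAt p (m + 2)
      = ∑ i ∈ Finset.range (m + 1), p ^ (i + 1) * (1 - p) ^ (m - i + 1) := by
  unfold probAt
  rw [← Finset.sum_filter]
  refine Finset.sum_nbij' (i := fun ω => ((List.ofFn ω).takeWhile id).length)
    (j := fun i => canonFn (m + 2) i) ?_ ?_ ?_ ?_ ?_
  · intro ω hω
    rw [Finset.mem_filter] at hω
    obtain ⟨a, b, hab, hc⟩ := (soonerAt_iff _ ω).mp hω.2
    rw [hc, takeWhile_canon]
    rw [Finset.mem_range]
    omega
  · intro i hi
    rw [Finset.mem_range] at hi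
    rw [Finset.mem_filter]
    refine ⟨Finset.mem_univ _, (soonerAt_iff _ _).mpr ⟨i, m - i, by omega, ?_⟩⟩
    exact ofFn_canonFn _ _ _ (by omega)
  · intro ω hω
    rw [Finset.mem_filter] at hω
    obtain ⟨a, b, hab, hc⟩ := (soonerAt_iff _ ω).mp hω.2
    rw [hc, takeWhile_canon, ← List.ofFn_inj, hc,
      ofFn_canonFn (m + 2) a b (by omega)]
  · intro i hi
    rw [Finset.mem_range] at hi
    rw [ofFn_canonFn (m + 2) i (m - i) (by omega), takeWhile_canon]
  · intro ω hω
    rw [Finset.mem_filter] at hω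
    obtain ⟨a, b, hab, hc⟩ := (soonerAt_iff _ ω).mp hω.2
    rw [hc, takeWhile_canon, wt_canon p ω a b hc]
    congr 2
    omega

lemma probAt_lt_two (p : ℝ) (n : ℕ) (hn : n < 2) : probAt p n = 0 := by
  unfold probAt
  refine Finset.sum_eq_zero fun ω _ => ?_
  rw [if_neg]
  intro hs
  obtain ⟨a, b, hab, -⟩ := (soonerAt_iff _ ω).mp hs
  omega

lemma summable_probSimul {p : ℝ} (hp0 : 0 < p) (hp1 : p < 1) :
    Summable (probSimul p) := by
  have hgeo : Summable (fun n : ℕ => ((1 - p) ^ 2 / p ^ 2) * p ^ n) :=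
    (summable_geometric_of_lt_one hp0.le hp1).mul_left _
  refine Summable.of_nonneg_of_le (fun n => ?_) (fun n => ?_) hgeo
  · rw [probSimul_eq]
    split_ifs with h
    · positivity
    · exact le_refl 0
  · rw [probSimul_eq]
    split_ifs with h
    · rw [div_mul_eq_mul_div, le_div_iff₀ (by positivity)]
      have : p ^ (n - 2) * p ^ 2 = p ^ n := by
        rw [← pow_add]
        congr 1
        omega
      calc p ^ (n - 2) * (1 - p) ^ 2 * p ^ 2
          = (1 - p) ^ 2 * (p ^ (n - 2) * p ^ 2) := by ring
        _ = (1 - p) ^ 2 * p ^ n := by rw [this]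
        _ ≤ (1 - p) ^ 2 * p ^ n := le_refl _
    · positivity

lemma tsum_probSimul {p : ℝ} (hp0 : 0 < p) (hp1 : p < 1) : (∑' n : ℕ, probSimul p n) = p ^ 2 * (1 - p) := by
  have hs := summable_probSimul hp0 hp1
  have hq0 : (1 : ℝ) - p ≠ 0 := by linarith
  rw [← Summable.sum_add_tsum_nat_add 4 hs]
  have h1 : (∑ i ∈ Finset.range 4, probSimul p i) = 0 := by
    simp [Finset.sum_range_succ, probSimul_eq]
  have h2 : ∀ n : ℕ, probSimul p (n + 4) = p ^ 2 * (1 - p) ^ 2 * p ^ n := by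
    intro n
    rw [probSimul_eq, if_pos (by omega)]
    have : n + 4 - 2 = 2 + n := by omega
    rw [this, pow_add]
    ring
  rw [h1, zero_add, tsum_congr h2, tsum_mul_left,
    tsum_geometric_of_lt_one hp0.le hp1]
  field_simp

lemma summable_geom_aux {p : ℝ} (hp0 : 0 < p) (hp1 : p < 1) : Summable (fun i : ℕ => p ^ (i + 1)) := by
  simpa [pow_succ, mul_comm] using
    (summable_geometric_of_lt_one hp0.le hp1).mul_left p

lemma tsum_geom_aux {p : ℝ} (hp0 : 0 < p) (hp1 : p < 1) : (∑' i : ℕ, p ^ (i + 1)) = p / (1 - p) := by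
  have : (fun i : ℕ => p ^ (i + 1)) = fun i : ℕ => p * p ^ i := by
    funext i; rw [pow_succ]; ring
  rw [this, tsum_mul_left, tsum_geometric_of_lt_one hp0.le hp1]
  rw [div_eq_mul_inv]

/-- For an i.i.d. binary source with `P(a) = p`, `P(b) = q = 1 - p`,
`0 < p < 1`, and `T` the sooner-time of the compound pattern `{ba, abba}`:
the probability that `X₁⋯X_T` ends in `abba` (i.e. `ba` and `abba` are
completed simultaneously at their first occurrence) equals `p²q`, and
consequently the probability that `ba` is observed strictly before `abba`
equals `1 - p²q`. -/
theorem prob_abba_simultaneous (p q : ℝ) (hp0 : 0 < p) (hp1 : p < 1)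
    (hq : q = 1 - p) :
    (∑' n : ℕ, probSimul p n) = p ^ 2 * q ∧
    (∑' n : ℕ, probBaFirst p n) = 1 - p ^ 2 * q := by
  subst hq
  have hq0 : 0 < 1 - p := by linarith
  have hq1 : 1 - p < 1 := by linarith
  have hp0' : (0:ℝ) < 1 - (1 - p) := by linarith
  -- Cauchy product setup
  have hf : Summable (fun i : ℕ => ‖p ^ (i + 1)‖) :=
    (summable_geom_aux hp0 hp1).congr fun i =>
      (Real.norm_of_nonneg (by positivity)).symm
  have hg : Summable (fun j : ℕ => ‖(1 - p) ^ (j + 1)‖) :=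
    (summable_geom_aux hq0 hq1).congr fun j =>
      (Real.norm_of_nonneg (by positivity)).symm
  set S : ℕ → ℝ :=
    fun m => ∑ i ∈ Finset.range (m + 1), p ^ (i + 1) * (1 - p) ^ (m - i + 1) with hS
  have hSsum : Summable S := by
    have := summable_norm_sum_mul_range_of_summable_norm hf hg
    exact this.of_norm
  have hStsum : (∑' m, S m) = 1 := by
    rw [hS]
    rw [← tsum_mul_tsum_eq_tsum_sum_range_of_summable_norm hf hg]
    rw [tsum_geom_aux hp0 hp1, tsum_geom_aux hq0 hq1]
    have h1p : (1 : ℝ) - (1 - p) = p := by ring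
    rw [h1p]
    field_simp
  -- probAt
  have hAS : ∀ m, probAt p (m + 2) = S m := fun m => probAt_eq p m
  have hAsum : Summable (probAt p) := by
    rw [← summable_nat_add_iff 2]
    exact (summable_congr hAS).mpr hSsum
  have hAtsum : (∑' n, probAt p n) = 1 := by
    rw [← Summable.sum_add_tsum_nat_add 2 hAsum]
    have h0 : (∑ i ∈ Finset.range 2, probAt p i) = 0 := by
      simp [Finset.sum_range_succ, probAt_lt_two p 0 (by omega),
        probAt_lt_two p 1 (by omega)]
    rw [h0, zero_add, tsum_congr hAS, hStsum]
  have hSim : (∑' n : ℕ, probSimul p n) = p ^ 2 * (1 - p) := tsum_probSimul hp0 hp1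
  refine ⟨hSim, ?_⟩
  have hBa : probBaFirst p = fun n => probAt p n - probSimul p n := by
    funext n
    have := probSimul_add_probBaFirst p n
    linarith
  rw [hBa]
  rw [Summable.tsum_sub hAsum (summable_probSimul hp0 hp1), hAtsum, hSim]
end

section
/- With (Xₙ) i.i.d. over {a, b}, P(a)=p, P(b)=q=1−p, and S¹_n the number of occurrences of ba in X₁⋯Xₙ, the variance satisfies Var(S¹_n)/n → p q (1 − 3 p q) as n → ∞. -/
open scoped Classical
open Filter

/-- Number of (possibly overlapping) occurrences of `w` as a substring of
`x`: the number of positions `i` such that `x[1..i+1]` ends with `w`. -/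
def countOcc (w x : List Bool) : ℕ :=
  ((Finset.range x.length).filter fun i => w <:+ x.take (i + 1)).card

/-- `E(S¹_n)`: expected number of occurrences of `ba` in `X₁⋯Xₙ`. -/
noncomputable def expCountBa (p : ℝ) (n : ℕ) : ℝ :=
  ∑ ω : Fin n → Bool, wt p ω * countOcc [false, true] (List.ofFn ω)

/-- `Var(S¹_n)`: variance of the number of occurrences of `ba` in `X₁⋯Xₙ`. -/
noncomputable def varCountBa (p : ℝ) (n : ℕ) : ℝ :=
  (∑ ω : Fin n → Bool, wt p ω * (countOcc [false, true] (List.ofFn ω) : ℝ) ^ 2)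
    - (expCountBa p n) ^ 2

/-! ### Auxiliary definitions and lemmas -/

/-- `ω` extended to `ℕ` with default value `true`. -/
def extf {n : ℕ} (ω : Fin n → Bool) (i : ℕ) : Bool :=
  if h : i < n then ω ⟨i, h⟩ else true

/-- Indicator of an occurrence of `ba` at positions `k, k+1`. -/
noncomputable def indBA {n : ℕ} (ω : Fin n → Bool) (k : ℕ) : ℝ :=
  if extf ω k = false ∧ extf ω (k + 1) = true then 1 else 0

lemma suffix_zero (l : List Bool) : ¬ ([false, true] <:+ l.take 1) := by
  intro h
  have := h.length_le
  simp at this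

lemma suffix_char {n : ℕ} (ω : Fin n → Bool) (k : ℕ) (hk : k + 1 < n) :
    ([false, true] <:+ (List.ofFn ω).take (k + 2)) ↔
      (ω ⟨k, by omega⟩ = false ∧ ω ⟨k + 1, hk⟩ = true) := by
  have hlen : ((List.ofFn ω).take (k + 2)).length = k + 2 := by
    simp; omega
  rw [List.suffix_iff_eq_drop, hlen]
  have hdrop : ((List.ofFn ω).take (k + 2)).drop (k + 2 - 2) =
      [ω ⟨k, by omega⟩, ω ⟨k + 1, hk⟩] := by
    apply List.ext_getElem
    · simp; omega
    · intro i h1 h2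
      simp only [List.getElem_drop, List.getElem_take, List.getElem_ofFn]
      simp at h2
      interval_cases i <;> simp
  simp only [List.length_cons, List.length_nil]
  rw [hdrop]
  simp only [List.cons_eq_cons, and_true]
  exact ⟨fun ⟨h1, h2⟩ => ⟨h1.symm, h2.symm⟩, fun ⟨h1, h2⟩ => ⟨h1.symm, h2.symm⟩⟩

lemma countOcc_eq {n : ℕ} (ω : Fin n → Bool) :
    ((countOcc [false, true] (List.ofFn ω) : ℝ)) =
      ∑ k ∈ Finset.range (n - 1), indBA ω k := by
  unfold countOcc
  rw [Finset.card_filter]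
  push_cast
  simp only [List.length_ofFn]
  cases n with
  | zero => simp
  | succ m =>
    rw [Finset.sum_range_succ']
    have h0 : (if [false, true] <:+ (List.ofFn ω).take (0 + 1) then (1:ℝ) else 0) = 0 := by
      rw [if_neg (suffix_zero _)]
    rw [h0, add_zero]
    have hm : m + 1 - 1 = m := rfl
    rw [hm]
    refine Finset.sum_congr rfl fun k hk => ?_
    have hk' : k + 1 < m + 1 := by
      simp at hk; omega
    have := suffix_char ω k hk'
    rw [show k + 1 + 1 = k + 2 from rfl]
    simp only [this]
    unfold indBA extf
    rw [dif_pos (show k < m + 1 by omega), dif_pos hk']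

/-- Workhorse: the expectation of a product of coordinate indicators
factorizes over the coordinates. -/
lemma sum_wt_prod_ind (p : ℝ) {n : ℕ} (s : Finset (Fin n)) (v : Fin n → Bool) :
    ∑ ω : Fin n → Bool, wt p ω * ∏ k ∈ s, (if ω k = v k then (1:ℝ) else 0)
      = ∏ k ∈ s, (if v k then p else 1 - p) := by
  have key : ∀ ω : Fin n → Bool,
      wt p ω * ∏ k ∈ s, (if ω k = v k then (1:ℝ) else 0)
      = ∏ k : Fin n, ((if ω k then p else 1 - p) *
          (if k ∈ s then (if ω k = v k then (1:ℝ) else 0) else 1)) := by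
    intro ω
    rw [Finset.prod_mul_distrib]
    congr 1
    rw [Finset.prod_ite_mem, Finset.univ_inter]
  simp_rw [key]
  have main := Finset.prod_univ_sum (fun _ : Fin n => (Finset.univ : Finset Bool))
    (fun k b => (if b then p else 1 - p) *
      (if k ∈ s then (if b = v k then (1:ℝ) else 0) else 1))
  rw [Fintype.piFinset_univ] at main
  rw [← main, ← Finset.univ_inter s, ← Finset.prod_ite_mem]
  refine Finset.prod_congr rfl fun k _ => ?_
  by_cases hk : k ∈ s
  · cases hv : v k <;> simp [Fintype.sum_bool, hk, hv]
  · simp [Fintype.sum_bool, hk]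

lemma indBA_eq {n : ℕ} (ω : Fin n → Bool) (k : ℕ) (hk : k + 1 < n) :
    indBA ω k = (if ω ⟨k, by omega⟩ = false then (1:ℝ) else 0) *
      (if ω ⟨k + 1, hk⟩ = true then (1:ℝ) else 0) := by
  unfold indBA extf
  rw [dif_pos (show k < n by omega), dif_pos hk]
  by_cases h1 : ω ⟨k, by omega⟩ = false <;>
    by_cases h2 : ω ⟨k + 1, hk⟩ = true <;> simp [h1, h2]

lemma indBA_zero {n : ℕ} (ω : Fin n → Bool) (k : ℕ) :
    indBA ω k * indBA ω (k + 1) = 0 := by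
  unfold indBA
  rcases h : extf ω (k + 1) <;> simp [h]

lemma indBA_sq {n : ℕ} (ω : Fin n → Bool) (k : ℕ) :
    indBA ω k * indBA ω k = indBA ω k := by
  unfold indBA
  by_cases h : extf ω k = false ∧ extf ω (k + 1) = true <;> simp [h]

lemma E_ind (p : ℝ) {n : ℕ} (k : ℕ) (hk : k + 1 < n) :
    ∑ ω : Fin n → Bool, wt p ω * indBA ω k = (1 - p) * p := by
  set a : Fin n := ⟨k, by omega⟩ with ha
  set b : Fin n := ⟨k + 1, hk⟩ with hb
  have hab : a ≠ b := by simp [ha, hb, Fin.ext_iff]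
  set v : Fin n → Bool := fun t => if t = b then true else false with hv
  have hrw : ∀ ω : Fin n → Bool,
      indBA ω k = ∏ t ∈ ({a, b} : Finset (Fin n)), (if ω t = v t then (1:ℝ) else 0) := by
    intro ω
    rw [Finset.prod_pair hab, indBA_eq ω k hk]
    simp only [hv, if_neg hab, if_pos rfl]
    rfl
  simp_rw [hrw]
  rw [sum_wt_prod_ind p _ v, Finset.prod_pair hab]
  simp only [hv, if_neg hab, if_pos rfl]
  simp

lemma E_ind_far (p : ℝ) {n : ℕ} (k j : ℕ) (hkj : k + 2 ≤ j) (hj : j + 1 < n) :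
    ∑ ω : Fin n → Bool, wt p ω * (indBA ω k * indBA ω j) = ((1 - p) * p) ^ 2 := by
  have hk : k + 1 < n := by omega
  set a : Fin n := ⟨k, by omega⟩
  set a' : Fin n := ⟨k + 1, hk⟩
  set b : Fin n := ⟨j, by omega⟩
  set b' : Fin n := ⟨j + 1, hj⟩
  have h2 : a ∉ ({a', b, b'} : Finset (Fin n)) := by
    simp [a, a', b, b', Fin.ext_iff]; omega
  have h3 : a' ∉ ({b, b'} : Finset (Fin n)) := by
    simp [a, a', b, b', Fin.ext_iff]; omega
  have h5 : b ≠ b' := by simp [a, a', b, b', Fin.ext_iff]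
  set v : Fin n → Bool := fun t => if t = a' ∨ t = b' then true else false with hv
  have hva : v a = false := by
    have : ¬ (a = a' ∨ a = b') := by simp [a, a', b, b', Fin.ext_iff]; omega
    simp only [hv, if_neg this]
  have hva' : v a' = true := by simp [hv]
  have hvb : v b = false := by
    have : ¬ (b = a' ∨ b = b') := by simp [a, a', b, b', Fin.ext_iff]; omega
    simp only [hv, if_neg this]
  have hvb' : v b' = true := by simp [hv]
  have hrw : ∀ ω : Fin n → Bool,
      indBA ω k * indBA ω j
        = ∏ t ∈ ({a, a', b, b'} : Finset (Fin n)), (if ω t = v t then (1:ℝ) else 0) := by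
    intro ω
    rw [Finset.prod_insert h2, Finset.prod_insert h3, Finset.prod_pair h5,
      indBA_eq ω k hk, indBA_eq ω j hj, hva, hva', hvb, hvb']
    ring
  simp_rw [hrw]
  rw [sum_wt_prod_ind p _ v,
    Finset.prod_insert h2, Finset.prod_insert h3, Finset.prod_pair h5,
    hva, hva', hvb, hvb']
  simp; ring

lemma exp_formula (p : ℝ) (n : ℕ) :
    expCountBa p n = (n - 1 : ℕ) * ((1 - p) * p) := by
  unfold expCountBa
  simp_rw [countOcc_eq, Finset.mul_sum]
  rw [Finset.sum_comm]
  have : ∀ k ∈ Finset.range (n - 1),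
      ∑ ω : Fin n → Bool, wt p ω * indBA ω k = (1 - p) * p := by
    intro k hk
    exact E_ind p k (by simp at hk; omega)
  rw [Finset.sum_congr rfl this, Finset.sum_const, Finset.card_range, nsmul_eq_mul]

lemma E2_val (p : ℝ) {n : ℕ} (k j : ℕ) (hk : k ∈ Finset.range (n - 1))
    (hj : j ∈ Finset.range (n - 1)) :
    ∑ ω : Fin n → Bool, wt p ω * (indBA ω k * indBA ω j)
      = ((1 - p) * p) ^ 2 + (if j = k then (1 - p) * p - ((1 - p) * p) ^ 2 else 0)
        + (if j = k + 1 then -((1 - p) * p) ^ 2 else 0)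
        + (if k = j + 1 then -((1 - p) * p) ^ 2 else 0) := by
  simp only [Finset.mem_range] at hk hj
  rcases Nat.lt_trichotomy j k with h | h | h
  · rcases Nat.lt_or_ge (j + 1) k with h2 | h2
    · -- k ≥ j + 2
      have : ∀ ω : Fin n → Bool, indBA ω k * indBA ω j = indBA ω j * indBA ω k :=
        fun ω => mul_comm _ _
      simp_rw [this]
      rw [E_ind_far p j k (by omega) (by omega)]
      have e1 : ¬ (j = k) := by omega
      have e2 : ¬ (j = k + 1) := by omega
      have e3 : ¬ (k = j + 1) := by omega
      simp [e1, e2, e3]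
    · -- k = j + 1
      have hkj : k = j + 1 := by omega
      subst hkj
      simp_rw [show ∀ ω : Fin n → Bool, indBA ω (j+1) * indBA ω j = 0 from
        fun ω => by rw [mul_comm]; exact indBA_zero ω j]
      simp [show ¬ (j = j + 1 + 1) from by omega]
  · subst h
    simp_rw [indBA_sq]
    rw [E_ind p j (by omega)]
    simp [show ¬ (j = j + 1) from by omega]
  · rcases Nat.lt_or_ge (k + 1) j with h2 | h2
    · -- j ≥ k + 2
      rw [E_ind_far p k j (by omega) (by omega)]
      have e1 : ¬ (j = k) := by omega
      have e2 : ¬ (j = k + 1) := by omega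
      have e3 : ¬ (k = j + 1) := by omega
      simp [e1, e2, e3]
    · -- j = k + 1
      have hkj : j = k + 1 := by omega
      subst hkj
      simp_rw [indBA_zero]
      simp [show ¬ (k = k + 1 + 1) from by omega]

lemma shift_sum (m : ℕ) (c : ℝ) :
    ∑ k ∈ Finset.range m, (if k + 1 ∈ Finset.range m then c else 0)
      = (m - 1 : ℕ) * c := by
  have h1 : ∀ k ∈ Finset.range m,
      (if k + 1 ∈ Finset.range m then c else 0)
        = (if k ∈ Finset.range (m - 1) then c else 0) := by
    intro k _
    simp only [Finset.mem_range]
    exact if_congr (by omega) rfl rfl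
  rw [Finset.sum_congr rfl h1, Finset.sum_ite_mem,
    Finset.inter_eq_right.mpr (Finset.range_subset_range.mpr (by omega)),
    Finset.sum_const, Finset.card_range, nsmul_eq_mul]

lemma second_moment (p : ℝ) (n : ℕ) :
    (∑ ω : Fin n → Bool, wt p ω * (countOcc [false, true] (List.ofFn ω) : ℝ) ^ 2)
      = ((n - 1 : ℕ) : ℝ) ^ 2 * ((1 - p) * p) ^ 2
        + ((n - 1 : ℕ) : ℝ) * ((1 - p) * p - ((1 - p) * p) ^ 2)
        - 2 * ((n - 1 - 1 : ℕ) : ℝ) * ((1 - p) * p) ^ 2 := by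
  set r : ℝ := (1 - p) * p with hr
  set m : ℕ := n - 1 with hm
  have expand : ∀ ω : Fin n → Bool,
      wt p ω * (countOcc [false, true] (List.ofFn ω) : ℝ) ^ 2
        = ∑ k ∈ Finset.range m, ∑ j ∈ Finset.range m,
            wt p ω * (indBA ω k * indBA ω j) := by
    intro ω
    rw [countOcc_eq, sq, Finset.sum_mul_sum, Finset.mul_sum]
    exact Finset.sum_congr rfl fun k _ => Finset.mul_sum _ _ _
  simp_rw [expand]
  rw [Finset.sum_comm]
  have swap2 : ∀ k ∈ Finset.range m,
      (∑ ω : Fin n → Bool, ∑ j ∈ Finset.range m, wt p ω * (indBA ω k * indBA ω j))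
        = ∑ j ∈ Finset.range m, ∑ ω : Fin n → Bool, wt p ω * (indBA ω k * indBA ω j) :=
    fun k _ => Finset.sum_comm
  rw [Finset.sum_congr rfl swap2]
  have eval : ∀ k ∈ Finset.range m, ∀ j ∈ Finset.range m,
      (∑ ω : Fin n → Bool, wt p ω * (indBA ω k * indBA ω j))
        = r ^ 2 + (if j = k then r - r ^ 2 else 0)
          + (if j = k + 1 then -r ^ 2 else 0) + (if k = j + 1 then -r ^ 2 else 0) :=
    fun k hk j hj => E2_val p k j hk hj
  rw [Finset.sum_congr rfl fun k hk => Finset.sum_congr rfl (eval k hk)]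
  simp_rw [Finset.sum_add_distrib]
  have T1 : ∑ _k ∈ Finset.range m, ∑ _j ∈ Finset.range m, r ^ 2 = (m : ℝ) ^ 2 * r ^ 2 := by
    simp [Finset.sum_const, Finset.card_range]; ring
  have T2 : ∑ k ∈ Finset.range m, ∑ j ∈ Finset.range m,
      (if j = k then r - r ^ 2 else 0) = (m : ℝ) * (r - r ^ 2) := by
    have inner : ∀ k ∈ Finset.range m,
        (∑ j ∈ Finset.range m, if j = k then r - r ^ 2 else 0) = r - r ^ 2 := by
      intro k hk
      rw [Finset.sum_ite_eq' (Finset.range m) k fun _ => r - r ^ 2, if_pos hk]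
    rw [Finset.sum_congr rfl inner, Finset.sum_const, Finset.card_range, nsmul_eq_mul]
  have T3 : ∑ k ∈ Finset.range m, ∑ j ∈ Finset.range m,
      (if j = k + 1 then -r ^ 2 else 0) = ((m - 1 : ℕ) : ℝ) * (-r ^ 2) := by
    have inner : ∀ k ∈ Finset.range m,
        (∑ j ∈ Finset.range m, if j = k + 1 then -r ^ 2 else 0)
          = (if k + 1 ∈ Finset.range m then -r ^ 2 else 0) := by
      intro k hk
      rw [Finset.sum_ite_eq' (Finset.range m) (k + 1) fun _ => -r ^ 2]
    rw [Finset.sum_congr rfl inner, shift_sum]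
  have T4 : ∑ k ∈ Finset.range m, ∑ j ∈ Finset.range m,
      (if k = j + 1 then -r ^ 2 else 0) = ((m - 1 : ℕ) : ℝ) * (-r ^ 2) := by
    rw [Finset.sum_comm]
    have inner : ∀ j ∈ Finset.range m,
        (∑ k ∈ Finset.range m, if k = j + 1 then -r ^ 2 else 0)
          = (if j + 1 ∈ Finset.range m then -r ^ 2 else 0) := by
      intro j hj
      rw [Finset.sum_ite_eq' (Finset.range m) (j + 1) fun _ => -r ^ 2]
    rw [Finset.sum_congr rfl inner, shift_sum]
  rw [T1, T2, T3, T4]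
  ring

lemma var_formula (p : ℝ) (n : ℕ) :
    varCountBa p n = ((n - 1 : ℕ) : ℝ) * ((1 - p) * p)
      - (((n - 1 : ℕ) : ℝ) + 2 * ((n - 1 - 1 : ℕ) : ℝ)) * ((1 - p) * p) ^ 2 := by
  unfold varCountBa
  rw [second_moment, exp_formula]
  ring

/-- For an i.i.d. binary source with `P(a) = p`, `P(b) = q = 1 - p`, the
variance of the number `S¹_n` of occurrences of `ba` in `X₁⋯Xₙ` satisfies
`Var(S¹_n)/n → p q (1 - 3 p q)` as `n → ∞`. -/
theorem var_count_ba_asymptotic (p q : ℝ) (hp0 : 0 < p) (hp1 : p < 1)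
    (hq : q = 1 - p) :
    Tendsto (fun n : ℕ => varCountBa p n / n) atTop
      (nhds (p * q * (1 - 3 * p * q))) := by
  set r : ℝ := (1 - p) * p with hr
  have key : (fun n : ℕ => varCountBa p n / n)
      =ᶠ[atTop] fun n : ℕ => r * (1 - 1 / n) - r ^ 2 * (3 - 5 * (1 / n)) := by
    filter_upwards [eventually_ge_atTop 2] with n hn
    rw [var_formula]
    have h1 : ((n - 1 : ℕ) : ℝ) = (n : ℝ) - 1 := by
      rw [Nat.cast_sub (by omega)]; norm_num
    have h2 : ((n - 1 - 1 : ℕ) : ℝ) = (n : ℝ) - 2 := by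
      rw [show n - 1 - 1 = n - 2 from by omega, Nat.cast_sub (by omega)]; norm_num
    have hn0 : (n : ℝ) ≠ 0 := by
      have : (0 : ℝ) < n := by exact_mod_cast (show 0 < n by omega)
      linarith
    rw [h1, h2]
    field_simp
    ring
  rw [show p * q * (1 - 3 * p * q) = r * (1 - 0) - r ^ 2 * (3 - 5 * 0) from by
    subst hq; ring]
  refine Tendsto.congr' key.symm ?_
  have h0 : Tendsto (fun n : ℕ => 1 / (n : ℝ)) atTop (nhds 0) :=
    tendsto_one_div_atTop_nhds_zero_nat
  exact ((tendsto_const_nhds.sub h0).const_mul r).sub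
    (((tendsto_const_nhds.sub (h0.const_mul 5))).const_mul (r ^ 2))
end

section
/- Let x be a string over an alphabet of size s and let Aut[x; z] be its autocorrelation polynomial. If f(n) denotes the number of strings of length n over the alphabet that do not contain x as a substring, then Σ_{n≥0} f(n)/zⁿ = z·Aut[x; z] / (1 + (z − s)·Aut[x; z]) as an identity of formal Laurent series. -/
open scoped Classical

noncomputable def autPoly {A : Type*} (x : List A) (z : ℂ) : ℂ :=
  ∑ n ∈ Finset.Icc 1 x.length, if x.take n <:+ x then z ^ (n - 1) else 0

noncomputable def avoidCount (A : Type*) [Fintype A] (x : List A) (n : ℕ) : ℕ :=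
  (Finset.univ.filter fun w : Fin n → A => ¬ x <:+: List.ofFn w).card

namespace GO
variable {A : Type*}

lemma suffix_of_suffix_length_le {l₁ l₂ l : List A} (h1 : l₁ <:+ l) (h2 : l₂ <:+ l)
    (h : l₁.length ≤ l₂.length) : l₁ <:+ l₂ := by
  rw [← List.reverse_prefix] at h1 h2 ⊢
  exact List.prefix_of_prefix_length_le h1 h2 (by simpa)

lemma infix_iff_take {x u : List A} : x <:+: u ↔ ∃ k ≤ u.length, x <:+ u.take k := by
  constructor
  · rintro ⟨s, t, rfl⟩
    refine ⟨(s ++ x).length, by simp, ?_⟩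
    rw [List.take_left]
    exact List.suffix_append s x
  · rintro ⟨k, hk, hsuf⟩
    exact hsuf.isInfix.trans (List.take_prefix k u).isInfix

lemma take_append_eq {l₁ l₂ : List A} {k : ℕ} (h : l₁.length = k) (j : ℕ) :
    (l₁ ++ l₂).take (k + j) = l₁ ++ l₂.take j := by
  subst h; exact List.take_length_add_append j

def EndOnly (x u : List A) : Prop := x <:+ u ∧ ∀ k < u.length, ¬ x <:+ u.take k

noncomputable def endCount (A : Type*) [Fintype A] (x : List A) (n : ℕ) : ℕ :=
  (Finset.univ.filter fun w : Fin n → A => EndOnly x (List.ofFn w)).card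

noncomputable def len (A : Type*) [Fintype A] (n : ℕ) : Finset (List A) :=
  (Finset.univ : Finset (Fin n → A)).image List.ofFn

lemma mem_len [Fintype A] {n : ℕ} {l : List A} : l ∈ len A n ↔ l.length = n := by
  constructor
  · intro h
    obtain ⟨w, -, rfl⟩ := Finset.mem_image.1 h
    simp
  · intro h
    subst h
    exact Finset.mem_image.2 ⟨l.get, Finset.mem_univ _, List.ofFn_get l⟩

lemma avoidCount_eq [Fintype A] (x : List A) (n : ℕ) :
    avoidCount A x n = ((len A n).filter (fun l => ¬ x <:+: l)).card := by
  rw [avoidCount, len, Finset.filter_image,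
    Finset.card_image_of_injective _ List.ofFn_injective]

lemma endCount_eq [Fintype A] (x : List A) (n : ℕ) :
    endCount A x n = ((len A n).filter (EndOnly x)).card := by
  rw [endCount, len, Finset.filter_image,
    Finset.card_image_of_injective _ List.ofFn_injective]

lemma endCount_eq_zero [Fintype A] {x : List A} {n : ℕ} (h : n < x.length) :
    endCount A x n = 0 := by
  rw [endCount_eq, Finset.card_eq_zero, Finset.filter_eq_empty_iff]
  rintro l hl ⟨hsuf, -⟩
  have := hsuf.length_le
  rw [mem_len.1 hl] at this
  omega

lemma step {x : List A} (v : List A) (a : A) :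
    (¬ x <:+: (v ++ [a]) ∨ EndOnly x (v ++ [a])) ↔ ¬ x <:+: v := by
  constructor
  · rintro (h | ⟨hs, h⟩) hv
    · exact h (hv.trans (List.prefix_append v [a]).isInfix)
    · obtain ⟨k, hk, hsuf⟩ := infix_iff_take.1 hv
      refine h k (by simp; omega) ?_
      rwa [List.take_append_of_le_length hk]
  · intro hv
    by_cases hva : x <:+: (v ++ [a])
    · right
      obtain ⟨k, hk, hsuf⟩ := infix_iff_take.1 hva
      simp only [List.length_append, List.length_singleton] at hk
      have hkv : ¬ (k ≤ v.length) := by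
        intro hle
        rw [List.take_append_of_le_length hle] at hsuf
        exact hv (infix_iff_take.2 ⟨k, hle, hsuf⟩)
      have hkk : k = v.length + 1 := by omega
      constructor
      · rwa [hkk, List.take_of_length_le (by simp)] at hsuf
      · intro k' hk' hsuf'
        simp only [List.length_append, List.length_singleton] at hk'
        have hle : k' ≤ v.length := by omega
        rw [List.take_append_of_le_length hle] at hsuf'
        exact hv (infix_iff_take.2 ⟨k', hle, hsuf'⟩)
    · left; exact hva

lemma key1 [Fintype A] (x : List A) (hx : x ≠ []) (n : ℕ) :
    Fintype.card A * avoidCount A x n = avoidCount A x (n+1) + endCount A x (n+1) := by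
  classical
  have hbij : (((len A n).filter (fun l => ¬ x <:+: l)) ×ˢ (Finset.univ : Finset A)).card
      = ((len A (n+1)).filter (fun l => ¬ x <:+: l ∨ EndOnly x l)).card := by
    refine Finset.card_bij' (fun p _ => p.1 ++ [p.2])
      (fun l hl => (l.dropLast,
        l.getLast (List.ne_nil_of_length_pos
          (by rw [mem_len.1 (Finset.mem_filter.1 hl).1]; omega))))
      ?_ ?_ ?_ ?_
    · rintro ⟨v, a⟩ hp
      dsimp only
      rw [Finset.mem_product, Finset.mem_filter] at hp
      obtain ⟨⟨hvlen, hvavoid⟩, -⟩ := hp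
      rw [Finset.mem_filter]
      exact ⟨mem_len.2 (by simp [mem_len.1 hvlen]), (step v a).2 hvavoid⟩
    · intro l hl
      rw [Finset.mem_filter] at hl
      obtain ⟨hllen, hlp⟩ := hl
      have hlen := mem_len.1 hllen
      have hne : l ≠ [] := List.ne_nil_of_length_pos (by omega)
      rw [Finset.mem_product, Finset.mem_filter]
      refine ⟨⟨mem_len.2 (by rw [List.length_dropLast, hlen]; omega), ?_⟩, Finset.mem_univ _⟩
      rw [← List.dropLast_append_getLast hne] at hlp
      exact (step _ _).1 hlp
    · rintro ⟨v, a⟩ hp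
      dsimp only
      simp [List.dropLast_concat, List.getLast_concat]
    · intro l hl
      dsimp only
      exact List.dropLast_append_getLast _
  have hsplit : ((len A (n+1)).filter (fun l => ¬ x <:+: l ∨ EndOnly x l)).card
      = avoidCount A x (n+1) + endCount A x (n+1) := by
    rw [Finset.filter_or, Finset.card_union_of_disjoint, avoidCount_eq, endCount_eq]
    rw [Finset.disjoint_filter]
    rintro l _ hnl ⟨hsuf, -⟩
    exact hnl hsuf.isInfix
  rw [← hsplit, ← hbij, Finset.card_product, avoidCount_eq]
  simp [mul_comm]

noncomputable def fo (x u : List A) : ℕ := sInf {k | x <:+ u.take k}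

lemma fo_spec {x : List A} (hx : x ≠ []) {w : List A} (hw : ¬ x <:+: w) :
    x <:+ (w ++ x).take (fo x (w ++ x)) ∧
    w.length < fo x (w ++ x) ∧ fo x (w ++ x) ≤ w.length + x.length ∧
    x.take (fo x (w ++ x) - w.length) <:+ x := by
  have hmem : (w.length + x.length) ∈ {k | x <:+ (w ++ x).take k} := by
    simp only [Set.mem_setOf_eq, ← List.length_append, List.take_length]
    exact List.suffix_append w x
  have hne : {k | x <:+ (w ++ x).take k}.Nonempty := ⟨_, hmem⟩
  have hfo_mem : x <:+ (w ++ x).take (fo x (w ++ x)) := Nat.sInf_mem hne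
  have hle : fo x (w ++ x) ≤ w.length + x.length := Nat.sInf_le hmem
  have hgt : w.length < fo x (w ++ x) := by
    by_contra h
    push_neg at h
    rw [List.take_append_of_le_length h] at hfo_mem
    exact hw (infix_iff_take.2 ⟨fo x (w ++ x), h, hfo_mem⟩)
  refine ⟨hfo_mem, hgt, hle, ?_⟩
  set j := fo x (w ++ x) - w.length with hj
  have hfoeq : fo x (w ++ x) = w.length + j := by omega
  have htk : (w ++ x).take (fo x (w ++ x)) = w ++ x.take j := by
    rw [hfoeq]; exact take_append_eq rfl j
  rw [htk] at hfo_mem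
  have hxj : x.take j <:+ w ++ x.take j := List.suffix_append w _
  refine suffix_of_suffix_length_le hxj hfo_mem ?_
  rw [List.length_take]
  exact min_le_right _ _

lemma key2 [Fintype A] (x : List A) (hx : x ≠ []) (n : ℕ) :
    avoidCount A x n = ∑ j ∈ (Finset.Icc 1 x.length).filter (fun j => x.take j <:+ x),
      endCount A x (n + j) := by
  classical
  rw [avoidCount_eq]
  rw [Finset.card_eq_sum_card_fiberwise (f := fun l => fo x (l ++ x) - n)
    (t := (Finset.Icc 1 x.length).filter (fun j => x.take j <:+ x)) ?_]
  · refine Finset.sum_congr rfl ?_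
    intro j hj
    rw [Finset.mem_filter, Finset.mem_Icc] at hj
    obtain ⟨⟨hj1, hjm⟩, hjs⟩ := hj
    rw [endCount_eq]
    refine Finset.card_bij' (fun l _ => (l ++ x).take (n + j)) (fun u _ => u.take n)
      ?_ ?_ ?_ ?_
    · intro l hl
      rw [Finset.mem_filter, Finset.mem_filter] at hl
      obtain ⟨⟨hllen, hlavoid⟩, hfib⟩ := hl
      have hlen := mem_len.1 hllen
      obtain ⟨hsufx, hgt, hle, -⟩ := fo_spec hx hlavoid
      rw [hlen] at hgt hle
      replace hfib : fo x (l ++ x) - n = j := hfib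
      have hfo : fo x (l ++ x) = n + j := by omega
      rw [Finset.mem_filter]
      have hulen : ((l ++ x).take (n + j)).length = n + j := by
        rw [List.length_take, List.length_append, hlen]
        omega
      refine ⟨mem_len.2 hulen, ?_, ?_⟩
      · rw [← hfo]; exact hsufx
      · intro k hk
        rw [hulen] at hk
        rw [List.take_take, min_eq_left (le_of_lt hk)]
        intro hsf
        have hle3 : fo x (l ++ x) ≤ k := Nat.sInf_le hsf
        omega
    · intro u hu
      rw [Finset.mem_filter] at hu
      obtain ⟨hulen', husuf, huend⟩ := hu
      have hulen := mem_len.1 hulen'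
      have hmle : x.length ≤ n + j := by
        have := husuf.length_le; omega
      have hdropn : u.drop n = x.take j := by
        have h1 : u.drop n = x.drop (x.length - j) := by
          have hdropu : u.drop (u.length - x.length) = x :=
            (List.suffix_iff_eq_drop.1 husuf).symm
          have h5 : u.drop n = (u.drop (u.length - x.length)).drop (x.length - j) := by
            rw [List.drop_drop]
            congr 1
            omega
          rw [h5, hdropu]
        have h2 : x.take j = x.drop (x.length - j) := by
          have h := List.suffix_iff_eq_drop.1 hjs
          rwa [List.length_take, min_eq_left hjm] at h
        rw [h1, h2]
      have hrecon : (u.take n ++ x).take (n + j) = u := by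
        have h4 : (u.take n).length = n := by
          rw [List.length_take]; omega
        rw [take_append_eq h4 j, ← hdropn, List.take_append_drop]
      have hagree : ∀ k, k ≤ n + j → (u.take n ++ x).take k = u.take k := by
        intro k hk
        conv_rhs => rw [← hrecon]
        rw [List.take_take, min_eq_left hk]
      have havoid : ¬ x <:+: u.take n := by
        intro hinf
        obtain ⟨k, hk, hsuf⟩ := infix_iff_take.1 hinf
        rw [List.length_take, min_eq_left (by omega : n ≤ u.length)] at hk
        rw [List.take_take, min_eq_left hk] at hsuf
        exact huend k (by omega) hsuf
      have hfo : fo x (u.take n ++ x) = n + j := by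
        have hmem : (n + j) ∈ {k | x <:+ (u.take n ++ x).take k} := by
          rw [Set.mem_setOf_eq, hrecon]; exact husuf
        have hle2 : fo x (u.take n ++ x) ≤ n + j := Nat.sInf_le hmem
        have hge : ¬ fo x (u.take n ++ x) < n + j := by
          intro hlt
          have hin : x <:+ (u.take n ++ x).take (fo x (u.take n ++ x)) :=
            Nat.sInf_mem ⟨_, hmem⟩
          rw [hagree _ (le_of_lt hlt)] at hin
          exact huend _ (by omega) hin
        omega
      rw [Finset.mem_filter, Finset.mem_filter]
      refine ⟨⟨mem_len.2 (by rw [List.length_take]; omega), havoid⟩, ?_⟩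
      rw [hfo]
      omega
    · intro l hl
      rw [Finset.mem_filter, Finset.mem_filter] at hl
      have hlen := mem_len.1 hl.1.1
      rw [List.take_take, min_eq_left (by omega : n ≤ n + j),
        List.take_append_of_le_length (by omega), ← hlen, List.take_length]
    · intro u hu
      rw [Finset.mem_filter] at hu
      obtain ⟨hulen', husuf, huend⟩ := hu
      have hulen := mem_len.1 hulen'
      have hmle : x.length ≤ n + j := by
        have := husuf.length_le; omega
      have hdropn : u.drop n = x.take j := by
        have h1 : u.drop n = x.drop (x.length - j) := by
          have hdropu : u.drop (u.length - x.length) = x :=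
            (List.suffix_iff_eq_drop.1 husuf).symm
          have h5 : u.drop n = (u.drop (u.length - x.length)).drop (x.length - j) := by
            rw [List.drop_drop]
            congr 1
            omega
          rw [h5, hdropu]
        have h2 : x.take j = x.drop (x.length - j) := by
          have h := List.suffix_iff_eq_drop.1 hjs
          rwa [List.length_take, min_eq_left hjm] at h
        rw [h1, h2]
      have h4 : (u.take n).length = n := by
        rw [List.length_take]; omega
      rw [take_append_eq h4 j, ← hdropn, List.take_append_drop]
  · intro l hl
    rw [Finset.mem_coe, Finset.mem_filter] at hl
    obtain ⟨hllen, hlavoid⟩ := hl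
    have hlen := mem_len.1 hllen
    obtain ⟨-, hgt, hle, hsuf⟩ := fo_spec hx hlavoid
    rw [hlen] at hgt hle hsuf
    rw [Finset.mem_coe, Finset.mem_filter, Finset.mem_Icc]
    show (1 ≤ fo x (l ++ x) - n ∧ fo x (l ++ x) - n ≤ x.length) ∧
      x.take (fo x (l ++ x) - n) <:+ x
    exact ⟨⟨by omega, by omega⟩, hsuf⟩



lemma avoidCount_zero [Fintype A] {x : List A} (hx : x ≠ []) : avoidCount A x 0 = 1 := by
  rw [avoidCount, Finset.filter_true_of_mem, Finset.card_univ]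
  · simp
  · intro w _
    rw [show List.ofFn w = ([] : List A) by simp, List.infix_nil]
    exact hx

lemma avoidCount_le [Fintype A] (x : List A) (n : ℕ) :
    avoidCount A x n ≤ Fintype.card A ^ n := by
  calc avoidCount A x n ≤ (Finset.univ : Finset (Fin n → A)).card :=
        Finset.card_filter_le _ _
    _ = Fintype.card A ^ n := by simp [Finset.card_univ]

lemma endCount_le [Fintype A] (x : List A) (n : ℕ) :
    endCount A x n ≤ Fintype.card A ^ n := by
  calc endCount A x n ≤ (Finset.univ : Finset (Fin n → A)).card :=
        Finset.card_filter_le _ _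
    _ = Fintype.card A ^ n := by simp [Finset.card_univ]

end GO

set_option maxHeartbeats 1000000 in
/-- Guibas–Odlyzko identity: for a nonempty string `x` over an alphabet of
size `s`, if `f(n)` counts the strings of length `n` avoiding `x` as a
substring, then `Σ_{n≥0} f(n)/zⁿ = z·Aut[x;z] / (1 + (z - s)·Aut[x;z])`
(convergent for `‖z‖ > s`). -/
theorem guibas_odlyzko {A : Type*} [Fintype A] (x : List A) (hx : x ≠ [])
    (s : ℕ) (hs : s = Fintype.card A) :
    ∀ z : ℂ, (s : ℝ) < ‖z‖ →
      HasSum (fun n : ℕ => (avoidCount A x n : ℂ) / z ^ n)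
        (z * autPoly x z / (1 + (z - s) * autPoly x z)) := by
  classical
  intro z hz
  have hA : Nonempty A := by
    cases x with
    | nil => exact absurd rfl hx
    | cons a _ => exact ⟨a⟩
  have hs1 : 1 ≤ s := by rw [hs]; exact Fintype.card_pos
  have hz1 : (1:ℝ) < ‖z‖ := lt_of_le_of_lt (by exact_mod_cast hs1) hz
  have hz0 : z ≠ 0 := by
    intro h; rw [h, norm_zero] at hz1; linarith
  have hzpos : (0:ℝ) < ‖z‖ := by linarith
  -- summability from the trivial bound c n ≤ s ^ n
  have hbound : ∀ c : ℕ → ℕ, (∀ n, c n ≤ s ^ n) →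
      Summable (fun n => (c n : ℂ) / z ^ n) := by
    intro c hc
    apply Summable.of_norm_bounded
      (summable_geometric_of_lt_one (r := (s:ℝ)/‖z‖) (by positivity) (by rw [div_lt_one hzpos]; exact hz))
    intro n
    calc ‖(c n : ℂ) / z ^ n‖ = (c n : ℝ) / ‖z‖ ^ n := by
          rw [norm_div, norm_pow, Complex.norm_natCast]
      _ ≤ (s:ℝ) ^ n / ‖z‖ ^ n := by
          gcongr
          exact_mod_cast hc n
      _ = ((s:ℝ)/‖z‖) ^ n := (div_pow _ _ _).symm
  have hfS : Summable (fun n => (avoidCount A x n : ℂ) / z ^ n) :=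
    hbound _ (fun n => by rw [hs]; exact GO.avoidCount_le x n)
  have hgS : Summable (fun n => (GO.endCount A x n : ℂ) / z ^ n) :=
    hbound _ (fun n => by rw [hs]; exact GO.endCount_le x n)
  set F := ∑' n : ℕ, (avoidCount A x n : ℂ) / z ^ n with hF
  set G := ∑' n : ℕ, (GO.endCount A x n : ℂ) / z ^ n with hG
  have hFs1 : Summable (fun n => (avoidCount A x (n+1) : ℂ) / z ^ (n+1)) :=
    (summable_nat_add_iff 1).2 hfS
  have hGs1 : Summable (fun n => (GO.endCount A x (n+1) : ℂ) / z ^ (n+1)) :=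
    (summable_nat_add_iff 1).2 hgS
  -- shifted tsums
  have hT1 : HasSum (fun n => (avoidCount A x (n+1) : ℂ) / z ^ (n+1)) (F - 1) := by
    have h := Summable.tsum_eq_zero_add hfS
    have h0 : (avoidCount A x 0 : ℂ) / z ^ 0 = 1 := by
      rw [GO.avoidCount_zero hx]; simp
    have : (∑' n : ℕ, (avoidCount A x (n+1) : ℂ) / z ^ (n+1)) = F - 1 := by
      rw [eq_sub_iff_add_eq, add_comm, ← h0, hF]
      exact h.symm
    exact this ▸ hFs1.hasSum
  have hT2 : HasSum (fun n => (GO.endCount A x (n+1) : ℂ) / z ^ (n+1)) G := by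
    have h := Summable.tsum_eq_zero_add hgS
    have h0 : (GO.endCount A x 0 : ℂ) / z ^ 0 = 0 := by
      rw [GO.endCount_eq_zero (List.length_pos_iff.2 hx)]; simp
    have : (∑' n : ℕ, (GO.endCount A x (n+1) : ℂ) / z ^ (n+1)) = G := by
      rw [hG, h, h0, zero_add]
    exact this ▸ hGs1.hasSum
  -- identity (1)
  have e1 : (s:ℂ) * F = z * (F - 1) + z * G := by
    have hsum : HasSum
        (fun n => z * ((avoidCount A x (n+1) : ℂ) / z ^ (n+1))
          + z * ((GO.endCount A x (n+1) : ℂ) / z ^ (n+1)))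
        (z * (F - 1) + z * G) := (hT1.mul_left z).add (hT2.mul_left z)
    have hpt : (fun n : ℕ => (s:ℂ) * ((avoidCount A x n : ℂ) / z ^ n))
        = (fun n => z * ((avoidCount A x (n+1) : ℂ) / z ^ (n+1))
          + z * ((GO.endCount A x (n+1) : ℂ) / z ^ (n+1))) := by
      funext n
      have hcast : (s:ℂ) * (avoidCount A x n : ℂ)
          = (avoidCount A x (n+1) : ℂ) + (GO.endCount A x (n+1) : ℂ) := by
        have h := GO.key1 x hx n
        rw [← hs] at h
        exact_mod_cast h
      have hzn : z ^ n ≠ 0 := pow_ne_zero _ hz0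
      have hzn1 : z ^ (n+1) ≠ 0 := pow_ne_zero _ hz0
      field_simp
      linear_combination (z ^ n * z) * hcast
    have hL : HasSum (fun n : ℕ => (s:ℂ) * ((avoidCount A x n : ℂ) / z ^ n))
        ((s:ℂ) * F) := hfS.hasSum.mul_left _
    rw [hpt] at hL
    exact hL.unique hsum
  -- identity (2)
  set C := (Finset.Icc 1 x.length).filter (fun j => x.take j <:+ x) with hC
  have hjsum : ∀ j ∈ C, HasSum (fun n => (GO.endCount A x (n+j) : ℂ) / z ^ n) (z ^ j * G) := by
    intro j hj
    rw [hC, Finset.mem_filter, Finset.mem_Icc] at hj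
    obtain ⟨⟨hj1, hjm⟩, -⟩ := hj
    have hsm : Summable (fun n => (GO.endCount A x (n+j) : ℂ) / z ^ (n+j)) :=
      (summable_nat_add_iff j).2 hgS
    have h1 : HasSum (fun n => (GO.endCount A x (n+j) : ℂ) / z ^ (n+j)) G := by
      have h := Summable.sum_add_tsum_nat_add (f := fun n => (GO.endCount A x n : ℂ) / z ^ n) j hgS
      have hzr : (∑ i ∈ Finset.range j, (GO.endCount A x i : ℂ) / z ^ i) = 0 := by
        refine Finset.sum_eq_zero fun i hi => ?_
        rw [GO.endCount_eq_zero (lt_of_lt_of_le (Finset.mem_range.1 hi) hjm)]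
        simp
      rw [hzr, zero_add] at h
      rw [← hG] at h
      exact h ▸ hsm.hasSum
    have h2 := h1.mul_left (z ^ j)
    have hpt : (fun n : ℕ => (GO.endCount A x (n+j) : ℂ) / z ^ n)
        = (fun n => z ^ j * ((GO.endCount A x (n+j) : ℂ) / z ^ (n+j))) := by
      funext n
      have hzn : z ^ n ≠ 0 := pow_ne_zero _ hz0
      have hznj : z ^ (n+j) ≠ 0 := pow_ne_zero _ hz0
      rw [pow_add]
      field_simp
    rw [hpt]
    exact h2
  have e2 : F = (∑ j ∈ C, z ^ j) * G := by
    have hsum : HasSum (fun n => ∑ j ∈ C, (GO.endCount A x (n+j) : ℂ) / z ^ n)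
        (∑ j ∈ C, z ^ j * G) := hasSum_sum hjsum
    have hpt : (fun n : ℕ => (avoidCount A x n : ℂ) / z ^ n)
        = (fun n => ∑ j ∈ C, (GO.endCount A x (n+j) : ℂ) / z ^ n) := by
      funext n
      rw [GO.key2 x hx n, ← hC]
      push_cast
      rw [Finset.sum_div]
    rw [Finset.sum_mul]
    have hFhas := hfS.hasSum
    rw [← hF, hpt] at hFhas
    exact hFhas.unique hsum
  have hCsum : (∑ j ∈ C, z ^ j) = z * autPoly x z := by
    rw [autPoly, Finset.mul_sum, hC, Finset.sum_filter]
    refine Finset.sum_congr rfl fun j hj => ?_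
    rw [Finset.mem_Icc] at hj
    rw [mul_ite, mul_zero]
    split
    · rw [mul_comm, ← pow_succ]
      congr 1
      omega
    · rfl
  rw [hCsum] at e2
  -- final algebra
  set P := autPoly x z with hP
  have halg : F * (1 + (z - (s:ℂ)) * P) = z * P := by
    have hGval : z * G = z - (z - (s:ℂ)) * F := by linear_combination -e1
    have h3 : z * F = z * P * (z * G) := by rw [e2]; ring
    rw [hGval] at h3
    have h4 : z * (F * (1 + (z - (s:ℂ)) * P)) = z * (z * P) := by linear_combination h3
    exact mul_left_cancel₀ hz0 h4
  have hD : (1 + (z - (s:ℂ)) * P) ≠ 0 := by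
    intro h
    rw [h, mul_zero] at halg
    have hP0 : P = 0 := by
      rcases mul_eq_zero.1 halg.symm with h' | h'
      · exact absurd h' hz0
      · exact h'
    rw [hP0, mul_zero, add_zero] at h
    exact one_ne_zero h
  have hFval : F = z * P / (1 + (z - (s:ℂ)) * P) := by
    rw [eq_div_iff hD]
    exact halg
  have hfin := hfS.hasSum
  rw [← hF, hFval] at hfin
  exact hfin
end
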